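/- For every state ρ on ℂ^d ⊗ ℂ^d, D(ρ) ≥ √( (4/d)·( 1/(2 − D₂(ρ,𝓜)²) − 1/2 ) ), where D₂(ρ,𝓜) = inf{ ‖ρ − σ‖_F : σ ∈ 𝓜 } is the Frobenius-norm distance from ρ to the set 𝓜 of mixtures of maximally entangled states. -/

import Mathlib

open scoped BigOperators Matrix Kronecker ComplexOrder

noncomputable section

/-- Partial trace over the second tensor factor. -/
def ptrace2 (d : ℕ) (ρ : Matrix (Fin d × Fin d) (Fin d × Fin d) ℂ) :
    Matrix (Fin d) (Fin d) ℂ :=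
  Matrix.of fun i k => ∑ j, ρ (i, j) (k, j)

/-- The rank-one projector |ψ⟩⟨ψ|. -/
def outer {n : Type*} [Fintype n] (ψ : n → ℂ) : Matrix n n ℂ :=
  Matrix.of fun p q => ψ p * star (ψ q)

/-- Frobenius (Hilbert-Schmidt) norm of a complex matrix. -/
def frobNorm {m n : Type*} [Fintype m] [Fintype n] (X : Matrix m n ℂ) : ℝ :=
  Real.sqrt (∑ i, ∑ j, Complex.normSq (X i j))

/-- The maximally entangled unit vector |I⟩. -/
def maxEnt (d : ℕ) : Fin d × Fin d → ℂ :=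
  fun p => if p.1 = p.2 then (↑(Real.sqrt d))⁻¹ else 0

/-- The set 𝓜 of mixtures of maximally entangled pure states. -/
def MESet (d : ℕ) : Set (Matrix (Fin d × Fin d) (Fin d × Fin d) ℂ) :=
  { σ | ∃ (n : ℕ) (p : Fin n → ℝ) (U : Fin n → Matrix (Fin d) (Fin d) ℂ),
    (∀ j, 0 ≤ p j) ∧ (∑ j, p j = 1) ∧
    (∀ j, U j ∈ Matrix.unitaryGroup (Fin d) ℂ) ∧
    σ = ∑ j, (p j : ℂ) •
      ((U j ⊗ₖ (1 : Matrix (Fin d) (Fin d) ℂ)) * outer (maxEnt d) *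
        (U j ⊗ₖ (1 : Matrix (Fin d) (Fin d) ℂ))ᴴ) }

/-- The Frobenius-norm distance from ρ to 𝓜. -/
def D2dist (d : ℕ) (ρ : Matrix (Fin d × Fin d) (Fin d × Fin d) ℂ) : ℝ :=
  sInf { x : ℝ | ∃ σ ∈ MESet d, x = frobNorm (ρ - σ) }

/-- The distance functional D. -/
def DD (d : ℕ) (ρ : Matrix (Fin d × Fin d) (Fin d × Fin d) ℂ) : ℝ :=
  sInf { x : ℝ | ∃ (n : ℕ) (p : Fin n → ℝ) (ψ : Fin n → (Fin d × Fin d) → ℂ),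
    (∀ j, 0 ≤ p j) ∧ (∑ j, p j = 1) ∧
    (∀ j, ∑ q, Complex.normSq (ψ j q) = 1) ∧
    ρ = ∑ j, (p j : ℂ) • outer (ψ j) ∧
    x = ∑ j, p j * (Real.sqrt 2 * frobNorm (ptrace2 d (outer (ψ j)) - (d : ℂ)⁻¹ • 1)) }

/-! Write a pure state ψ as a d × d matrix M, so that Tr₂|ψ⟩⟨ψ| = MMᴴ has eigenvalues μᵢ with
∑ μᵢ = 1. The unitary factor U of the polar decomposition of M gives
|⟨(U ⊗ 𝟙)I, ψ⟩|² = (∑ √μᵢ)² / d, and Hölder's inequality (∑ μᵢ)³ ≤ (∑ √μᵢ)² ∑ μᵢ² turns this into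
|⟨(U ⊗ 𝟙)I, ψ⟩|² ≥ 1 / (1 + d s²), where s = ‖Tr₂|ψ⟩⟨ψ| − 𝟙/d‖_F. So ψ lies within
`distBound d (√2 s)` of a maximally entangled pure state. For a decomposition ρ = ∑ pⱼ |ψⱼ⟩⟨ψⱼ|,
mixing these maximally entangled states with the weights pⱼ gives σ ∈ 𝓜, and the triangle
inequality and concavity of `distBound d` give D₂(ρ, 𝓜) ≤ distBound d (∑ pⱼ √2 sⱼ); this
inequality, solved for ∑ pⱼ √2 sⱼ, is the claim. -/

open Matrix

theorem Finset.sum_sq_pow_three_le_sq_sum_mul_sum_pow_four {ι : Type*} (s : Finset ι)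
    {a : ι → ℝ} (ha : ∀ i ∈ s, 0 ≤ a i) :
    (∑ i ∈ s, a i ^ 2) ^ 3 ≤ (∑ i ∈ s, a i) ^ 2 * ∑ i ∈ s, a i ^ 4 := by
  have h₁ : (∑ i ∈ s, a i ^ 2) ^ 2 ≤ (∑ i ∈ s, a i) * ∑ i ∈ s, a i ^ 3 :=
    sum_sq_le_sum_mul_sum_of_sq_le_mul s ha (fun i hi => pow_nonneg (ha i hi) 3)
      fun i _ => le_of_eq (by ring)
  have h₂ : (∑ i ∈ s, a i ^ 3) ^ 2 ≤ (∑ i ∈ s, a i ^ 2) * ∑ i ∈ s, a i ^ 4 :=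
    sum_sq_le_sum_mul_sum_of_sq_le_mul s (fun i _ => sq_nonneg _) (fun i _ => by positivity)
      fun i _ => le_of_eq (by ring)
  have h₃ : 0 ≤ ∑ i ∈ s, a i := sum_nonneg ha
  have h₄ : 0 ≤ ∑ i ∈ s, a i ^ 3 := sum_nonneg fun i hi => pow_nonneg (ha i hi) 3
  rcases (sum_nonneg fun i (_ : i ∈ s) => sq_nonneg (a i)).eq_or_lt with h | h
  · rw [← h, zero_pow three_ne_zero]
    positivity
  · refine le_of_mul_le_mul_right ?_ h
    nlinarith [mul_le_mul h₁ h₁ (sq_nonneg _) (mul_nonneg h₃ h₄)]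

theorem concaveOn_of_le_tangent {s : Set ℝ} {f f' : ℝ → ℝ} (hs : Convex ℝ s)
    (h : ∀ x ∈ s, ∀ t ∈ s, f x ≤ f t + f' t * (x - t)) : ConcaveOn ℝ s f := by
  refine ⟨hs, fun x hx y hy a b ha hb hab => ?_⟩
  set t := a • x + b • y with ht
  have hx' := mul_le_mul_of_nonneg_left (h x hx t (hs hx hy ha hb hab)) ha
  have hy' := mul_le_mul_of_nonneg_left (h y hy t (hs hx hy ha hb hab)) hb
  have hsum : a * (f t + f' t * (x - t)) + b * (f t + f' t * (y - t)) = f t := by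
    simp only [ht, smul_eq_mul]
    linear_combination (f t - f' t * t) * hab
  simp only [smul_eq_mul] at hsum ⊢
  linarith

/-- For `u = √2 s`, `distBound d u = √(2 - 2 / (1 + d s²))` bounds the Frobenius distance from a
pure state `ψ` with `‖Tr₂|ψ⟩⟨ψ| − 𝟙/d‖_F = s` to the nearest maximally entangled pure state. -/
def distBound (D u : ℝ) : ℝ := Real.sqrt (2 * D * u ^ 2 / (2 + D * u ^ 2))

theorem distBound_eq {D u : ℝ} (hD : 0 ≤ D) (hu : 0 ≤ u) :
    distBound D u = Real.sqrt (2 * D) * u / Real.sqrt (2 + D * u ^ 2) := by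
  rw [distBound, Real.sqrt_div' _ (by positivity), Real.sqrt_mul' _ (sq_nonneg u),
    Real.sqrt_sq hu]

theorem distBound_le_tangent {D u t : ℝ} (hD : 0 ≤ D) (hu : 0 ≤ u) (ht : 0 ≤ t) :
    distBound D u ≤ distBound D t
      + 2 * Real.sqrt (2 * D) / Real.sqrt (2 + D * t ^ 2) ^ 3 * (u - t) := by
  rw [distBound_eq hD hu, distBound_eq hD ht]
  set k := Real.sqrt (2 * D)
  set r := Real.sqrt (2 + D * u ^ 2)
  set s := Real.sqrt (2 + D * t ^ 2)
  have hr0 : 0 < r := by positivity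
  have hs0 : 0 < s := by positivity
  have hr2 : r ^ 2 = 2 + D * u ^ 2 := Real.sq_sqrt (by positivity)
  have hs2 : s ^ 2 = 2 + D * t ^ 2 := Real.sq_sqrt (by positivity)
  have key : u * s ^ 3 ≤ r * (2 * u + D * t ^ 3) := by
    rw [← pow_le_pow_iff_left₀ (by positivity) (by positivity) two_ne_zero, ← sub_nonneg]
    have hfactor : (r * (2 * u + D * t ^ 3)) ^ 2 - (u * s ^ 3) ^ 2
        = 2 * D * (u - t) ^ 2 * (2 * u * (u + 2 * t) + D * t ^ 3 * (2 * u + t)) := by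
      rw [mul_pow, hr2, show (u * s ^ 3) ^ 2 = u ^ 2 * (s ^ 2) ^ 3 by ring, hs2]
      ring
    rw [hfactor]
    positivity
  have hrhs : k * t / s + 2 * k / s ^ 3 * (u - t) = k * (2 * u + D * t ^ 3) / s ^ 3 := by
    field_simp
    rw [hs2]
    ring
  rw [hrhs, div_le_div_iff₀ hr0 (by positivity)]
  nlinarith [mul_le_mul_of_nonneg_left key (Real.sqrt_nonneg (2 * D))]

theorem concaveOn_distBound {D : ℝ} (hD : 0 ≤ D) : ConcaveOn ℝ (Set.Ici 0) (distBound D) :=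
  concaveOn_of_le_tangent (convex_Ici 0) fun _ hu _ ht => distBound_le_tangent hD hu ht

theorem sqrt_le_of_le_distBound {D t x : ℝ} (hD : 0 < D) (ht : 0 ≤ t) (hx : 0 ≤ x)
    (h : x ≤ distBound D t) : Real.sqrt ((4 / D) * (1 / (2 - x ^ 2) - 1 / 2)) ≤ t := by
  have h2t : 0 < 2 + D * t ^ 2 := by positivity
  have hsq : x ^ 2 ≤ 2 - 4 / (2 + D * t ^ 2) := by
    have := pow_le_pow_left₀ hx h 2
    rwa [distBound, Real.sq_sqrt (by positivity),
      show 2 * D * t ^ 2 / (2 + D * t ^ 2) = 2 - 4 / (2 + D * t ^ 2) by field_simp; ring] at this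
  have hgap : 0 < 2 - x ^ 2 := by linarith [show 0 < 4 / (2 + D * t ^ 2) by positivity]
  have hinv : 1 / (2 - x ^ 2) ≤ (2 + D * t ^ 2) / 4 := by
    rw [div_le_div_iff₀ hgap (by norm_num)]
    rw [le_sub_iff_add_le, ← le_sub_iff_add_le', div_le_iff₀ h2t] at hsq
    nlinarith
  rw [Real.sqrt_le_left ht]
  calc 4 / D * (1 / (2 - x ^ 2) - 1 / 2) ≤ 4 / D * ((2 + D * t ^ 2) / 4 - 1 / 2) := by gcongr
    _ = t ^ 2 := by field_simp; ring

section Frobenius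

variable {m n : Type*} [Fintype m] [Fintype n]

attribute [local instance] Matrix.frobeniusSeminormedAddCommGroup Matrix.frobeniusNormedSpace

theorem frobNorm_nonneg (X : Matrix m n ℂ) : 0 ≤ frobNorm X := Real.sqrt_nonneg _

theorem frobNorm_sq (X : Matrix m n ℂ) : frobNorm X ^ 2 = ∑ i, ∑ j, Complex.normSq (X i j) :=
  Real.sq_sqrt (Finset.sum_nonneg fun _ _ => Finset.sum_nonneg fun _ _ => Complex.normSq_nonneg _)

theorem frobNorm_sq_eq_re_trace (X : Matrix m n ℂ) : frobNorm X ^ 2 = (X * Xᴴ).trace.re := by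
  rw [frobNorm_sq, trace, Complex.re_sum]
  refine Finset.sum_congr rfl fun i _ => ?_
  simp [mul_apply, Complex.re_sum, Complex.mul_conj]

theorem frobNorm_eq_norm (X : Matrix m n ℂ) : frobNorm X = ‖X‖ := by
  simp [frobenius_norm_def, frobNorm, Real.sqrt_eq_rpow, Complex.normSq_eq_norm_sq]

theorem frobNorm_sum_le {ι : Type*} (s : Finset ι) (X : ι → Matrix m n ℂ) :
    frobNorm (∑ i ∈ s, X i) ≤ ∑ i ∈ s, frobNorm (X i) := by
  simpa only [frobNorm_eq_norm] using norm_sum_le s X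

theorem frobNorm_ofReal_smul {c : ℝ} (hc : 0 ≤ c) (X : Matrix m n ℂ) :
    frobNorm ((c : ℂ) • X) = c * frobNorm X := by
  simp only [frobNorm_eq_norm, norm_smul, Complex.norm_real, Real.norm_eq_abs, abs_of_nonneg hc]

theorem frobNorm_sub_smul_one_sq [DecidableEq n] (A : Matrix n n ℂ) (c : ℝ) :
    frobNorm (A - (c : ℂ) • 1) ^ 2
      = frobNorm A ^ 2 - 2 * c * A.trace.re + c ^ 2 * Fintype.card n := by
  have hc : ((c : ℂ) • (1 : Matrix n n ℂ))ᴴ = (c : ℂ) • 1 := by simp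
  rw [frobNorm_sq_eq_re_trace, frobNorm_sq_eq_re_trace, conjTranspose_sub, hc]
  simp only [sub_mul, mul_sub, trace_sub, Matrix.smul_mul, Matrix.mul_smul, Matrix.one_mul,
    Matrix.mul_one, smul_smul, trace_smul, trace_one, trace_conjTranspose, smul_eq_mul,
    Complex.sub_re, Complex.re_ofReal_mul, ← Complex.ofReal_mul, Complex.star_def,
    Complex.conj_re, Complex.natCast_re]
  ring

theorem Matrix.IsHermitian.frobNorm_sq_eq_sum_eigenvalues_sq [DecidableEq n] {A : Matrix n n ℂ}
    (hA : A.IsHermitian) : frobNorm A ^ 2 = ∑ i, hA.eigenvalues i ^ 2 := by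
  have hAA : A * A = Unitary.conjStarAlgAut ℂ _ hA.eigenvectorUnitary
      (diagonal (RCLike.ofReal ∘ hA.eigenvalues) * diagonal (RCLike.ofReal ∘ hA.eigenvalues)) := by
    conv_lhs => rw [hA.spectral_theorem]
    exact (map_mul _ _ _).symm
  rw [frobNorm_sq_eq_re_trace, hA.eq, hAA, Unitary.conjStarAlgAut_apply, trace_mul_cycle,
    Unitary.coe_star_mul_self, one_mul, diagonal_mul_diagonal, trace_diagonal, Complex.re_sum]
  simp [sq]

end Frobenius

theorem exists_orthonormalBasis_inner_eq_norm {𝕜 E ι : Type*} [RCLike 𝕜] [NormedAddCommGroup E]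
    [InnerProductSpace 𝕜 E] [FiniteDimensional 𝕜 E] [Fintype ι]
    (hcard : Module.finrank 𝕜 E = Fintype.card ι) {r : ι → E}
    (hr : Pairwise fun i j => inner 𝕜 (r i) (r j) = 0) :
    ∃ b : OrthonormalBasis ι 𝕜 E, ∀ i, inner 𝕜 (b i) (r i) = (‖r i‖ : 𝕜) := by
  set v : ι → E := fun i => (‖r i‖⁻¹ : 𝕜) • r i
  have hv : Orthonormal 𝕜 ({i | r i ≠ 0}.domRestrict v) :=
    ⟨fun i => norm_smul_inv_norm i.2, fun i j hij => by
      simp only [Set.domRestrict_apply, v, inner_smul_left, inner_smul_right,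
        hr (Subtype.val_injective.ne hij), mul_zero]⟩
  obtain ⟨b, hb⟩ := hv.exists_orthonormalBasis_extension_of_card_eq hcard
  refine ⟨b, fun i => ?_⟩
  by_cases hi : r i = 0
  · simp [hi]
  · have : ‖r i‖ ≠ 0 := norm_ne_zero_iff.mpr hi
    rw [hb i hi, inner_smul_left, inner_self_eq_norm_sq_to_K]
    simp only [map_inv₀, RCLike.conj_ofReal]
    field_simp

/-- The unitary factor `U` of the polar decomposition of `M` attains the trace norm of `M`. -/
theorem Matrix.exists_unitary_trace_mul_conjTranspose_eq_sum_sqrt_eigenvalues {n : Type*}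
    [Fintype n] [DecidableEq n] (M : Matrix n n ℂ) :
    ∃ U ∈ unitaryGroup n ℂ, (M * Uᴴ).trace =
      ∑ i, (Real.sqrt ((isHermitian_mul_conjTranspose_self M).eigenvalues i) : ℂ) := by
  set hA := isHermitian_mul_conjTranspose_self M
  set W : Matrix n n ℂ := (hA.eigenvectorUnitary : Matrix n n ℂ)
  set N := Wᴴ * M
  have hN : N * Nᴴ = diagonal (fun i => (hA.eigenvalues i : ℂ)) := by
    have := hA.conjStarAlgAut_star_eigenvectorUnitary
    simp only [Unitary.conjStarAlgAut_apply, Unitary.coe_star, star_eq_conjTranspose] at this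
    rw [show N * Nᴴ = Wᴴ * (M * Mᴴ) * Wᴴᴴ by simp [N, Matrix.mul_assoc], this]
    rfl
  set r : n → EuclideanSpace ℂ n := fun i => WithLp.toLp 2 (N i)
  have hr : ∀ i j, inner ℂ (r i) (r j) = (N * Nᴴ) j i := fun i j => by
    rw [EuclideanSpace.inner_eq_star_dotProduct]
    rfl
  have hnorm : ∀ i, ‖r i‖ = Real.sqrt (hA.eigenvalues i) := fun i => by
    have h := norm_sq_eq_re_inner (𝕜 := ℂ) (r i)
    rw [hr, hN, diagonal_apply_eq] at h
    rw [← Real.sqrt_sq (norm_nonneg _), h]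
    rfl
  obtain ⟨b, hb⟩ := exists_orthonormalBasis_inner_eq_norm (𝕜 := ℂ) (by simp) (r := r)
    fun i j hij => (hr i j).trans (by rw [hN, diagonal_apply_ne _ (Ne.symm hij)])
  set Q : Matrix n n ℂ := ((EuclideanSpace.basisFun n ℂ).toBasis.toMatrix b)ᵀ
  have hQ : ∀ i j, Q i j = b i j := by simp [Q, Module.Basis.toMatrix_apply]
  have hQU : Q ∈ unitaryGroup n ℂ := transpose_mem_unitaryGroup_iff.mpr
    ((EuclideanSpace.basisFun n ℂ).toMatrix_orthonormalBasis_mem_unitary b)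
  refine ⟨W * Q, Submonoid.mul_mem _ hA.eigenvectorUnitary.2 hQU, ?_⟩
  calc (M * (W * Q)ᴴ).trace = (N * Qᴴ).trace := by
        rw [conjTranspose_mul, ← Matrix.mul_assoc, trace_mul_cycle, Matrix.mul_assoc]
    _ = ∑ i, inner ℂ (b i) (r i) := by
        simp [trace, mul_apply, hQ, EuclideanSpace.inner_eq_star_dotProduct, dotProduct, r]
    _ = _ := by simp [hb, hnorm]

theorem Matrix.IsHermitian.eq_sum_eigenvalues_smul_outer {n : Type*} [Fintype n] [DecidableEq n]
    {A : Matrix n n ℂ} (hA : A.IsHermitian) :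
    A = ∑ k, (hA.eigenvalues k : ℂ) • outer (hA.eigenvectorBasis k) := by
  conv_lhs => rw [hA.spectral_theorem]
  ext p q
  simp only [Unitary.conjStarAlgAut_apply, mul_apply, outer, Matrix.sum_apply, diagonal_apply,
    eigenvectorUnitary_apply, Complex.coe_algebraMap, Function.comp_apply, mul_ite, mul_zero, Finset.sum_ite_eq',
    Finset.mem_univ, if_true, star_apply, RCLike.star_def, smul_apply, of_apply, smul_eq_mul]
  exact Finset.sum_congr rfl fun k _ => by ring

theorem Matrix.PosSemidef.exists_pure_decomposition {n : Type*} [Fintype n] [DecidableEq n]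
    {ρ : Matrix n n ℂ} (hρ : ρ.PosSemidef) (hρtr : ρ.trace = 1) :
    ∃ (N : ℕ) (p : Fin N → ℝ) (ψ : Fin N → n → ℂ), (∀ j, 0 ≤ p j) ∧ ∑ j, p j = 1 ∧
      (∀ j, ∑ q, Complex.normSq (ψ j q) = 1) ∧ ρ = ∑ j, (p j : ℂ) • outer (ψ j) := by
  set hH := hρ.isHermitian
  set e := Fintype.equivFin n
  refine ⟨_, fun j => hH.eigenvalues (e.symm j), fun j => hH.eigenvectorBasis (e.symm j),
    fun j => hρ.eigenvalues_nonneg _, ?_, fun j => ?_, ?_⟩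
  · have h := hH.trace_eq_sum_eigenvalues
    rw [hρtr] at h
    rw [e.symm.sum_comp (fun k => hH.eigenvalues k)]
    exact_mod_cast (by simpa using h.symm : ((∑ i, hH.eigenvalues i : ℝ) : ℂ) = 1)
  · have h := hH.eigenvectorBasis.orthonormal.1 (e.symm j)
    rw [EuclideanSpace.norm_eq, Real.sqrt_eq_one] at h
    simpa [Complex.normSq_eq_norm_sq] using h
  · rw [e.symm.sum_comp (fun k => (hH.eigenvalues k : ℂ) • outer (hH.eigenvectorBasis k))]
    exact hH.eq_sum_eigenvalues_smul_outer

section PureStates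

variable {n : Type*} [Fintype n]

theorem conjTranspose_outer (ψ : n → ℂ) : (outer ψ)ᴴ = outer ψ := by
  ext p q
  simp [outer, mul_comm]

theorem mul_outer_mul_conjTranspose (B : Matrix n n ℂ) (ψ : n → ℂ) :
    B * outer ψ * Bᴴ = outer (B *ᵥ ψ) := by
  change B * vecMulVec ψ (star ψ) * Bᴴ = vecMulVec (B *ᵥ ψ) (star (B *ᵥ ψ))
  rw [mul_vecMulVec, vecMulVec_mul, star_mulVec]

theorem trace_outer_mul_outer (ψ φ : n → ℂ) :
    (outer ψ * outer φ).trace = (star φ ⬝ᵥ ψ) * (star ψ ⬝ᵥ φ) := by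
  simp only [trace, outer, mul_apply, diag_apply, of_apply, dotProduct, Pi.star_apply,
    Finset.sum_mul_sum]
  exact Finset.sum_congr rfl fun i _ => Finset.sum_congr rfl fun k _ => by ring

theorem star_dotProduct_self_of_sum_normSq {ψ : n → ℂ} (hψ : ∑ q, Complex.normSq (ψ q) = 1) :
    star ψ ⬝ᵥ ψ = 1 := by
  simp only [dotProduct, Pi.star_apply, Complex.star_def, ← Complex.normSq_eq_conj_mul_self]
  exact_mod_cast hψ

theorem frobNorm_outer_sub_outer_sq {ψ φ : n → ℂ} (hψ : ∑ q, Complex.normSq (ψ q) = 1)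
    (hφ : ∑ q, Complex.normSq (φ q) = 1) :
    frobNorm (outer ψ - outer φ) ^ 2 = 2 - 2 * Complex.normSq (star φ ⬝ᵥ ψ) := by
  have hdual : star ψ ⬝ᵥ φ = star (star φ ⬝ᵥ ψ) := by rw [star_dotProduct]
  rw [frobNorm_sq_eq_re_trace, conjTranspose_sub, conjTranspose_outer, conjTranspose_outer,
    sub_mul, mul_sub, mul_sub, trace_sub, trace_sub, trace_sub, trace_outer_mul_outer,
    trace_outer_mul_outer, trace_outer_mul_outer, trace_outer_mul_outer,
    star_dotProduct_self_of_sum_normSq hψ, star_dotProduct_self_of_sum_normSq hφ, hdual,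
    mul_comm (star (star φ ⬝ᵥ ψ)), Complex.star_def, Complex.mul_conj]
  simp only [mul_one, Complex.sub_re, Complex.one_re, Complex.ofReal_re]
  ring

end PureStates

section MaximallyEntangled

variable {d : ℕ}

def maxEntVec (d : ℕ) (U : Matrix (Fin d) (Fin d) ℂ) : Fin d × Fin d → ℂ :=
  (U ⊗ₖ (1 : Matrix (Fin d) (Fin d) ℂ)) *ᵥ maxEnt d

theorem maxEntVec_apply (U : Matrix (Fin d) (Fin d) ℂ) (i j : Fin d) :
    maxEntVec d U (i, j) = (Real.sqrt d : ℂ)⁻¹ * U i j := by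
  simp [maxEntVec, mulVec, dotProduct, Fintype.sum_prod_type, one_apply, maxEnt, mul_comm]

theorem sum_normSq_maxEntVec (hd : 0 < d) {U : Matrix (Fin d) (Fin d) ℂ}
    (hU : U ∈ unitaryGroup (Fin d) ℂ) : ∑ q, Complex.normSq (maxEntVec d U q) = 1 := by
  have hU' : frobNorm U ^ 2 = d := by
    rw [frobNorm_sq_eq_re_trace, ← star_eq_conjTranspose, mem_unitaryGroup_iff.mp hU]
    simp
  rw [frobNorm_sq] at hU'
  simp only [Fintype.sum_prod_type, maxEntVec_apply, Complex.normSq_mul, Complex.normSq_inv,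
    Complex.normSq_ofReal, Real.mul_self_sqrt (Nat.cast_nonneg d), ← Finset.mul_sum, hU']
  field_simp

theorem star_maxEntVec_dotProduct (U : Matrix (Fin d) (Fin d) ℂ) (ψ : Fin d × Fin d → ℂ) :
    star (maxEntVec d U) ⬝ᵥ ψ = (Real.sqrt d : ℂ)⁻¹ * (of (Function.curry ψ) * Uᴴ).trace := by
  simp only [dotProduct, Fintype.sum_prod_type, Pi.star_apply, maxEntVec_apply, trace, diag_apply,
    mul_apply, Finset.mul_sum, star_mul', conjTranspose_apply, of_apply, Function.curry_apply]
  refine Finset.sum_congr rfl fun i _ => Finset.sum_congr rfl fun j _ => ?_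
  simp [mul_comm, mul_left_comm]

theorem sum_smul_outer_maxEntVec_mem_MESet {N : ℕ} {p : Fin N → ℝ}
    {U : Fin N → Matrix (Fin d) (Fin d) ℂ} (hp : ∀ j, 0 ≤ p j) (hp1 : ∑ j, p j = 1)
    (hU : ∀ j, U j ∈ unitaryGroup (Fin d) ℂ) :
    ∑ j, (p j : ℂ) • outer (maxEntVec d (U j)) ∈ MESet d :=
  ⟨N, p, U, hp, hp1, hU, by simp only [mul_outer_mul_conjTranspose, maxEntVec]⟩

theorem ptrace2_outer (ψ : Fin d × Fin d → ℂ) :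
    ptrace2 d (outer ψ) = of (Function.curry ψ) * (of (Function.curry ψ))ᴴ := by
  ext i k
  simp [ptrace2, outer, mul_apply]

theorem exists_unitary_one_div_le_normSq_maxEntVec_dotProduct (hd : 0 < d)
    {ψ : Fin d × Fin d → ℂ} (hψ : ∑ q, Complex.normSq (ψ q) = 1) :
    ∃ U ∈ unitaryGroup (Fin d) ℂ,
      1 / (1 + d * frobNorm (ptrace2 d (outer ψ) - (d : ℂ)⁻¹ • 1) ^ 2)
        ≤ Complex.normSq (star (maxEntVec d U) ⬝ᵥ ψ) := by
  set M := of (Function.curry ψ)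
  set hA := isHermitian_mul_conjTranspose_self M
  set μ := hA.eigenvalues
  obtain ⟨U, hU, htr⟩ := M.exists_unitary_trace_mul_conjTranspose_eq_sum_sqrt_eigenvalues
  refine ⟨U, hU, ?_⟩
  have hμ0 : ∀ i, 0 ≤ μ i := eigenvalues_self_mul_conjTranspose_nonneg M
  have htrace : (M * Mᴴ).trace.re = 1 := by
    rw [← frobNorm_sq_eq_re_trace, frobNorm_sq, ← hψ, Fintype.sum_prod_type]
    rfl
  have hμ1 : ∑ i, μ i = 1 := by
    rw [← htrace, hA.trace_eq_sum_eigenvalues, Complex.re_sum]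
    rfl
  have hfrob : 1 + d * frobNorm (ptrace2 d (outer ψ) - (d : ℂ)⁻¹ • 1) ^ 2
      = d * ∑ i, μ i ^ 2 := by
    rw [ptrace2_outer, show (d : ℂ)⁻¹ = (((d : ℝ)⁻¹ : ℝ) : ℂ) by push_cast; rfl,
      frobNorm_sub_smul_one_sq, hA.frobNorm_sq_eq_sum_eigenvalues_sq, htrace, Fintype.card_fin]
    field_simp
    ring
  have hoverlap : Complex.normSq (star (maxEntVec d U) ⬝ᵥ ψ)
      = (∑ i, Real.sqrt (μ i)) ^ 2 / d := by
    rw [star_maxEntVec_dotProduct, htr, ← Complex.ofReal_sum, Complex.normSq_mul,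
      Complex.normSq_inv, Complex.normSq_ofReal, Complex.normSq_ofReal,
      Real.mul_self_sqrt (Nat.cast_nonneg d)]
    ring
  have hHolder : 1 ≤ (∑ i, Real.sqrt (μ i)) ^ 2 * ∑ i, μ i ^ 2 := by
    have h := Finset.univ.sum_sq_pow_three_le_sq_sum_mul_sum_pow_four
      (a := fun i => Real.sqrt (μ i)) fun i _ => Real.sqrt_nonneg _
    have h4 : ∀ i, Real.sqrt (μ i) ^ 4 = μ i ^ 2 := fun i => by
      rw [show 4 = 2 * 2 from rfl, pow_mul, Real.sq_sqrt (hμ0 i)]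
    simpa [Real.sq_sqrt (hμ0 _), h4, hμ1] using h
  have hdpos : (0 : ℝ) < d := Nat.cast_pos.mpr hd
  rw [hfrob, hoverlap, div_le_div_iff₀ (by nlinarith) hdpos]
  nlinarith

theorem exists_unitary_frobNorm_sub_le_distBound (hd : 0 < d) {ψ : Fin d × Fin d → ℂ}
    (hψ : ∑ q, Complex.normSq (ψ q) = 1) :
    ∃ U ∈ unitaryGroup (Fin d) ℂ, frobNorm (outer ψ - outer (maxEntVec d U))
      ≤ distBound d (Real.sqrt 2 * frobNorm (ptrace2 d (outer ψ) - (d : ℂ)⁻¹ • 1)) := by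
  obtain ⟨U, hU, hoverlap⟩ := exists_unitary_one_div_le_normSq_maxEntVec_dotProduct hd hψ
  refine ⟨U, hU, ?_⟩
  rw [distBound, Real.le_sqrt (frobNorm_nonneg _) (by positivity),
    frobNorm_outer_sub_outer_sq hψ (sum_normSq_maxEntVec hd hU)]
  set s := frobNorm (ptrace2 d (outer ψ) - (d : ℂ)⁻¹ • 1)
  have hs : 2 * d * (Real.sqrt 2 * s) ^ 2 / (2 + d * (Real.sqrt 2 * s) ^ 2)
      = 2 - 2 * (1 / (1 + d * s ^ 2)) := by
    rw [mul_pow, Real.sq_sqrt zero_le_two]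
    field_simp
    ring
  linarith

end MaximallyEntangled

theorem D2dist_nonneg (d : ℕ) (ρ : Matrix (Fin d × Fin d) (Fin d × Fin d) ℂ) : 0 ≤ D2dist d ρ :=
  Real.sInf_nonneg fun _ ⟨_, _, hx⟩ => hx ▸ frobNorm_nonneg _

theorem D2dist_le_frobNorm_sub {d : ℕ} (ρ : Matrix (Fin d × Fin d) (Fin d × Fin d) ℂ)
    {σ : Matrix (Fin d × Fin d) (Fin d × Fin d) ℂ} (hσ : σ ∈ MESet d) :
    D2dist d ρ ≤ frobNorm (ρ - σ) :=
  csInf_le ⟨0, fun _ ⟨_, _, hx⟩ => hx ▸ frobNorm_nonneg _⟩ ⟨σ, hσ, rfl⟩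

/-- Lower bound on D in terms of the Frobenius distance to the set 𝓜 of mixtures of
maximally entangled states. -/
theorem DD_ge_sqrt_of_D2dist
    (d : ℕ) (hd : 0 < d)
    (ρ : Matrix (Fin d × Fin d) (Fin d × Fin d) ℂ)
    (hρ : ρ.PosSemidef) (hρtr : ρ.trace = 1) :
    DD d ρ ≥ Real.sqrt ((4 / d) * (1 / (2 - (D2dist d ρ) ^ 2) - 1 / 2)) := by
  obtain ⟨N, p₀, ψ₀, hp₀, hp₀1, hψ₀, hρ₀⟩ := hρ.exists_pure_decomposition hρtr
  refine le_csInf ⟨_, N, p₀, ψ₀, hp₀, hp₀1, hψ₀, hρ₀, rfl⟩ ?_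
  rintro x ⟨n, p, ψ, hp, hp1, hψ, rfl, rfl⟩
  choose U hU hdist using fun j => exists_unitary_frobNorm_sub_le_distBound hd (hψ j)
  set u := fun j => Real.sqrt 2 * frobNorm (ptrace2 d (outer (ψ j)) - (d : ℂ)⁻¹ • 1)
  have hu : ∀ j, 0 ≤ u j := fun j => mul_nonneg (Real.sqrt_nonneg 2) (frobNorm_nonneg _)
  refine sqrt_le_of_le_distBound (Nat.cast_pos.mpr hd)
    (Finset.sum_nonneg fun j _ => mul_nonneg (hp j) (hu j)) (D2dist_nonneg d _) ?_
  calc D2dist d _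
      ≤ frobNorm (∑ j, (p j : ℂ) • outer (ψ j) - ∑ j, (p j : ℂ) • outer (maxEntVec d (U j))) :=
        D2dist_le_frobNorm_sub _ (sum_smul_outer_maxEntVec_mem_MESet hp hp1 hU)
    _ ≤ ∑ j, p j * frobNorm (outer (ψ j) - outer (maxEntVec d (U j))) := by
        simp only [← Finset.sum_sub_distrib, ← smul_sub, ← frobNorm_ofReal_smul (hp _)]
        exact frobNorm_sum_le _ _
    _ ≤ ∑ j, p j * distBound d (u j) :=
        Finset.sum_le_sum fun j _ => mul_le_mul_of_nonneg_left (hdist j) (hp j)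
    _ ≤ distBound d (∑ j, p j * u j) :=
        (concaveOn_distBound (Nat.cast_nonneg d)).le_map_sum (fun j _ => hp j) hp1 fun j _ => hu j
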